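/- Truncated multivariate Hermite sum bound: Let n and d be positive integers, let y ∈ ℝⁿ, and let u ∈ (0, 1). Then Σ_{a} (∏_{i=1}^{n} He_{a_i}(y_i))² / (∏_{i=1}^{n} a_i!) ≤ u^{−d} · (1 − u²)^{−n/2} · exp( (u/(1+u)) · ‖y‖₂² ), where the sum ranges over all multi-indices a = (a₁, …, a_n) of nonnegative integers with a₁ + ⋯ + a_n ≤ d. -/

import Mathlib

open Finset Polynomial MeasureTheory ProbabilityTheory Real
open scoped NNReal RealInnerProductSpace

/-! In one variable the bound is Bessel's inequality in `L²(N(0, 1))`. The Hermite polynomials are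
orthogonal there with `‖He_k‖² = k!`. The likelihood ratio `F` of `N(√u x, 1 - u)` against
`N(0, 1)` has coefficients `⟪F, He_k⟫ = E[He_k(N(√u x, 1 - u))] = u^(k/2) He_k(x)`, and, by
completing the square, `‖F‖² = exp (u x² / (1 + u)) / √(1 - u²)`. Both Hermite integrals follow from
Stein's identity `E[W p(W)] = m E[p(W)] + s E[p'(W)]` for `W ~ N(m, s)` and the recurrence
`He_{k+2} = X He_{k+1} - (k + 1) He_k`.

In `n` variables, the weights `u^(∑ aᵢ) ≥ u^d` on `∑ aᵢ ≤ d` let the constraint be dropped at the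
cost of `u^(-d)` (Rankin's trick). The sum over the box then factorises into one-variable sums. -/

namespace Polynomial

theorem derivative_hermite_succ (n : ℕ) :
    derivative (hermite (n + 1)) = (n + 1 : ℤ[X]) * hermite n := by
  induction n with
  | zero => simp [hermite_zero]
  | succ n ih =>
    rw [hermite_succ (n + 1), derivative_sub, derivative_mul, derivative_X, ih,
      derivative_mul, derivative_add, derivative_natCast, derivative_one]
    push_cast
    linear_combination -(↑n + 1 : ℤ[X]) * hermite_succ n

theorem hermite_add_two (n : ℕ) :
    hermite (n + 2) = X * hermite (n + 1) - (n + 1 : ℤ[X]) * hermite n := by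
  rw [hermite_succ (n + 1), derivative_hermite_succ]

end Polynomial

section GaussianPolynomial

variable {R : Type*} [CommRing R] [Algebra R ℝ] {m : ℝ} {s : ℝ≥0}

theorem integrable_aeval_gaussianReal (p : R[X]) :
    Integrable (fun w => aeval w p) (gaussianReal m s) := by
  have hpow (i : ℕ) : Integrable (fun w : ℝ => w ^ i) (gaussianReal m s) := by
    refine (memLp_id_gaussianReal (μ := m) (v := s) i).integrable_norm_pow'.mono'
      (by fun_prop) (ae_of_all _ fun w => by simp)
  simp_rw [aeval_eq_sum_range, Algebra.smul_def]
  exact integrable_finsetSum _ fun i _ => (hpow i).const_mul _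

theorem hasDerivAt_gaussianPDFReal (m : ℝ) (s : ℝ≥0) (w : ℝ) :
    HasDerivAt (gaussianPDFReal m s) (-((w - m) / s) * gaussianPDFReal m s w) w := by
  have hexponent : HasDerivAt (fun x => -(x - m) ^ 2 / (2 * s)) (-((w - m) / s)) w :=
    ((((hasDerivAt_id' w).sub_const m).pow 2).neg.div_const (2 * (s : ℝ))).congr_deriv
      (by ring)
  exact (hexponent.exp.const_mul _).congr_deriv (by simp only [gaussianPDFReal]; ring)

theorem integrable_gaussianReal_iff (hs : s ≠ 0) {f : ℝ → ℝ} :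
    Integrable f (gaussianReal m s) ↔ Integrable (fun w => gaussianPDFReal m s w * f w) := by
  rw [gaussianReal_of_var_ne_zero _ hs, integrable_withDensity_iff_integrable_smul'
    (measurable_gaussianPDF _ _) (ae_of_all _ fun _ => gaussianPDF_lt_top)]
  simp [toReal_gaussianPDF]

theorem memLp_two_aeval_gaussianReal (p : R[X]) :
    MemLp (fun w => aeval w p) 2 (gaussianReal m s) :=
  (memLp_two_iff_integrable_sq (p.continuous_aeval.aestronglyMeasurable)).2
    (by convert integrable_aeval_gaussianReal (m := m) (s := s) (p ^ 2) using 2; simp)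

theorem integral_mul_aeval_gaussianReal (hs : s ≠ 0) (p : R[X]) :
    ∫ w, w * aeval w p ∂gaussianReal m s =
      m * ∫ w, aeval w p ∂gaussianReal m s +
        s * ∫ w, aeval w (derivative p) ∂gaussianReal m s := by
  simp only [integral_gaussianReal_eq_integral_smul hs, smul_eq_mul, ← mul_assoc]
  set φ := gaussianPDFReal m s
  have hint (q : R[X]) : Integrable (fun w => φ w * aeval w q) :=
    (integrable_gaussianReal_iff hs).1 (integrable_aeval_gaussianReal q)
  have hintX : Integrable (fun w => φ w * (w * aeval w p)) := by
    convert hint (X * p) using 3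
    simp
  have hintB : Integrable (fun w => φ w * (w * aeval w p) - m * (φ w * aeval w p)) :=
    hintX.sub ((hint p).const_mul m)
  have hderiv (w : ℝ) : HasDerivAt (fun w => φ w * aeval w p)
      (φ w * aeval w (derivative p) -
        (s : ℝ)⁻¹ * (φ w * (w * aeval w p) - m * (φ w * aeval w p))) w :=
    ((hasDerivAt_gaussianPDFReal m s w).mul (p.hasDerivAt_aeval w)).congr_deriv (by ring)
  have hzero := integral_eq_zero_of_hasDerivAt_of_integrable hderiv
    ((hint _).sub (hintB.const_mul _)) (hint p)
  rw [integral_sub (hint _) (hintB.const_mul _), integral_const_mul,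
    integral_sub hintX ((hint p).const_mul m), integral_const_mul] at hzero
  have hs' : (s : ℝ) ≠ 0 := by exact_mod_cast hs
  field_simp at hzero
  linear_combination -hzero

theorem integral_hermite_add_two_gaussianReal (hs : s ≠ 0) (k : ℕ) :
    ∫ w, aeval w (hermite (k + 2)) ∂gaussianReal m s =
      m * ∫ w, aeval w (hermite (k + 1)) ∂gaussianReal m s +
        (s - 1) * (k + 1) * ∫ w, aeval w (hermite k) ∂gaussianReal m s := by
  have hstein := integral_mul_aeval_gaussianReal (m := m) hs (hermite (k + 1))
  simp only [derivative_hermite_succ, map_mul, map_add, map_natCast, map_one] at hstein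
  simp only [hermite_add_two, map_sub, map_mul, aeval_X, map_add, map_natCast, map_one]
  rw [integral_sub, hstein, integral_const_mul]
  · ring
  · convert integrable_aeval_gaussianReal (m := m) (s := s) (X * hermite (k + 1)) using 1
    simp
  · convert integrable_aeval_gaussianReal (m := m) (s := s) ((k + 1 : ℤ[X]) * hermite k)
      using 1
    simp

end GaussianPolynomial

theorem integral_hermite_gaussianReal {v : ℝ} (hv : v ^ 2 < 1) (x : ℝ) (k : ℕ) :
    ∫ w, aeval w (hermite k) ∂gaussianReal (v * x) (1 - v ^ 2).toNNReal =
      v ^ k * aeval x (hermite k) := by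
  have hs : (1 - v ^ 2).toNNReal ≠ 0 := by simpa using hv
  induction k using Nat.twoStepInduction with
  | zero => simp [hermite_zero]
  | one => simp [integral_id_gaussianReal]
  | more k ih₀ ih₁ =>
    rw [integral_hermite_add_two_gaussianReal hs, ih₀, ih₁, hermite_add_two,
      Real.coe_toNNReal _ (by linarith)]
    simp only [map_sub, map_mul, aeval_X, map_add, map_natCast, map_one]
    ring

theorem integral_hermite_mul_hermite_succ_gaussianReal (j k : ℕ) :
    ∫ w, aeval w (hermite j) * aeval w (hermite (k + 1)) ∂gaussianReal 0 1 =
      ∫ w, aeval w (derivative (hermite j)) * aeval w (hermite k) ∂gaussianReal 0 1 := by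
  have hint (p q : ℤ[X]) :
      Integrable (fun w => aeval w p * aeval w q) (gaussianReal 0 1) := by
    simpa only [map_mul] using integrable_aeval_gaussianReal (p * q)
  have hstein := integral_mul_aeval_gaussianReal (m := 0) one_ne_zero (hermite j * hermite k)
  simp only [derivative_mul, map_mul, map_add, zero_mul, zero_add, NNReal.coe_one,
    one_mul] at hstein
  rw [integral_add (hint _ _) (hint _ _)] at hstein
  simp only [hermite_succ, map_sub, map_mul, aeval_X, mul_sub,
    mul_left_comm (aeval _ (hermite j)) _ (aeval _ (hermite k))]
  rw [integral_sub]
  · linear_combination hstein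
  · simpa only [map_mul, aeval_X] using hint X (hermite j * hermite k)
  · exact hint _ _

theorem integral_hermite_mul_hermite_gaussianReal (j k : ℕ) :
    ∫ w, aeval w (hermite j) * aeval w (hermite k) ∂gaussianReal 0 1 =
      if j = k then (k.factorial : ℝ) else 0 := by
  induction k generalizing j with
  | zero =>
    have := integral_hermite_gaussianReal (v := 0) (by norm_num) 0 j
    rcases j with _ | j <;> simp_all [hermite_zero]
  | succ k ih =>
    rw [integral_hermite_mul_hermite_succ_gaussianReal]
    rcases j with _ | j
    · simp [hermite_zero]
    · simp only [derivative_hermite_succ, map_mul, map_add, map_natCast, map_one, mul_assoc,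
        integral_const_mul, ih]
      split_ifs with h₁ h₂ h₂
      · subst h₁
        push_cast [Nat.factorial_succ]
        ring
      · omega
      · omega
      · simp

theorem sum_inner_sq_div_norm_sq_le {E ι : Type*} [NormedAddCommGroup E]
    [InnerProductSpace ℝ E] {e : ι → E} (he : Pairwise fun j k => ⟪e j, e k⟫ = 0) (x : E)
    (t : Finset ι) :
    ∑ k ∈ t, ⟪x, e k⟫ ^ 2 / ‖e k‖ ^ 2 ≤ ‖x‖ ^ 2 := by
  classical
  set c : ι → ℝ := fun k => ⟪x, e k⟫ / ‖e k‖ ^ 2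
  -- the orthogonal projection of `x` onto the span of the `e k`, `k ∈ t`
  set y := ∑ k ∈ t, c k • e k
  have hterm (k : ι) : c k * ⟪x, e k⟫ = ⟪x, e k⟫ ^ 2 / ‖e k‖ ^ 2 := by
    simp only [c]; ring
  have hxy : ⟪x, y⟫ = ∑ k ∈ t, ⟪x, e k⟫ ^ 2 / ‖e k‖ ^ 2 := by
    simp only [y, inner_sum, real_inner_smul_right, hterm]
  have hyy : ⟪y, y⟫ = ∑ k ∈ t, ⟪x, e k⟫ ^ 2 / ‖e k‖ ^ 2 := by
    simp only [y, sum_inner, inner_sum, real_inner_smul_left, real_inner_smul_right]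
    refine sum_congr rfl fun j hj => ?_
    rw [sum_eq_single j (fun k _ hkj => by rw [he hkj, mul_zero, mul_zero]) (by simp [hj]),
      real_inner_self_eq_norm_sq, ← hterm]
    by_cases hj0 : ‖e j‖ = 0
    · simp [c, hj0]
    · simp only [c]; field_simp
  nlinarith [norm_sub_sq_real x y, sq_nonneg ‖x - y‖, real_inner_self_eq_norm_sq y]

theorem MeasureTheory.MemLp.inner_toLp_toLp {α : Type*} [MeasurableSpace α] {μ : Measure α}
    {f g : α → ℝ} (hf : MemLp f 2 μ) (hg : MemLp g 2 μ) :
    ⟪hf.toLp f, hg.toLp g⟫ = ∫ a, f a * g a ∂μ := by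
  rw [L2.inner_def]
  refine integral_congr_ae ?_
  filter_upwards [hf.coeFn_toLp, hg.coeFn_toLp] with a hfa hga
  simp [hfa, hga, mul_comm]

theorem sum_integral_mul_sq_div_le_integral_sq {α ι : Type*} [MeasurableSpace α]
    {μ : Measure α} {F : α → ℝ} {e : ι → α → ℝ} (hF : MemLp F 2 μ)
    (he : ∀ k, MemLp (e k) 2 μ) (horth : Pairwise fun j k => ∫ a, e j a * e k a ∂μ = 0)
    (t : Finset ι) :
    ∑ k ∈ t, (∫ a, F a * e k a ∂μ) ^ 2 / ∫ a, e k a ^ 2 ∂μ ≤ ∫ a, F a ^ 2 ∂μ := by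
  have hnorm {f : α → ℝ} (hf : MemLp f 2 μ) : ‖hf.toLp f‖ ^ 2 = ∫ a, f a ^ 2 ∂μ := by
    rw [← real_inner_self_eq_norm_sq, hf.inner_toLp_toLp hf]
    simp only [sq]
  have := sum_inner_sq_div_norm_sq_le (e := fun k => (he k).toLp (e k))
    (fun j k hjk => ((he j).inner_toLp_toLp (he k)).trans (horth hjk)) (hF.toLp F) t
  simpa only [hF.inner_toLp_toLp, hnorm] using this

theorem gaussianPDFReal_sq_div_gaussianPDFReal {u : ℝ} (hu0 : 0 ≤ u) (hu1 : u < 1) (x w : ℝ) :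
    gaussianPDFReal (√u * x) (1 - u).toNNReal w ^ 2 / gaussianPDFReal 0 1 w =
      exp (u / (1 + u) * x ^ 2) / √(1 - u ^ 2) *
        gaussianPDFReal (2 * √u * x / (1 + u)) ((1 - u) / (1 + u)).toNNReal w := by
  have h1u : 0 < 1 - u := by linarith
  have h1u' : 0 < 1 + u := by linarith
  simp only [gaussianPDFReal, Real.coe_toNNReal _ h1u.le,
    Real.coe_toNNReal _ (div_pos h1u h1u').le, NNReal.coe_one]
  have hexp : exp (-(w - √u * x) ^ 2 / (2 * (1 - u))) ^ 2 / exp (-(w - 0) ^ 2 / (2 * 1)) =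
      exp (u / (1 + u) * x ^ 2) *
        exp (-(w - 2 * √u * x / (1 + u)) ^ 2 / (2 * ((1 - u) / (1 + u)))) := by
    rw [← exp_nat_mul, ← exp_sub, ← exp_add]
    congr 1
    field_simp
    linear_combination (2 * x ^ 2 * (1 - u)) * Real.sq_sqrt hu0
  have hconst : (√(2 * π * (1 - u)))⁻¹ ^ 2 / (√(2 * π * 1))⁻¹ =
      (√(1 - u ^ 2))⁻¹ * (√(2 * π * ((1 - u) / (1 + u))))⁻¹ := by
    have h2π : (0 : ℝ) ≤ 2 * π := by positivity
    rw [mul_one, sqrt_mul h2π (1 - u), sqrt_mul h2π, sqrt_div h1u.le,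
      show 1 - u ^ 2 = (1 - u) * (1 + u) by ring, sqrt_mul h1u.le]
    have : 0 < √(2 * π) := by positivity
    have : 0 < √(1 - u) := sqrt_pos.2 h1u
    have : 0 < √(1 + u) := sqrt_pos.2 h1u'
    field_simp
  calc _ = (√(2 * π * (1 - u)))⁻¹ ^ 2 / (√(2 * π * 1))⁻¹ *
        (exp (-(w - √u * x) ^ 2 / (2 * (1 - u))) ^ 2 / exp (-(w - 0) ^ 2 / (2 * 1))) := by ring
    _ = _ := by rw [hconst, hexp]; ring

theorem sum_pow_mul_hermite_sq_div_factorial_le {u : ℝ} (hu0 : 0 ≤ u) (hu1 : u < 1) (x : ℝ)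
    (t : Finset ℕ) :
    ∑ k ∈ t, u ^ k * aeval x (hermite k) ^ 2 / k.factorial ≤
      exp (u / (1 + u) * x ^ 2) / √(1 - u ^ 2) := by
  have hv : √u ^ 2 = u := sq_sqrt hu0
  have hs : (1 - u).toNNReal ≠ 0 := by simpa using hu1
  have hs' : ((1 - u) / (1 + u)).toNNReal ≠ 0 := by
    simpa using div_pos (sub_pos.2 hu1) (by linarith : (0 : ℝ) < 1 + u)
  set C := exp (u / (1 + u) * x ^ 2) / √(1 - u ^ 2)
  set F : ℝ → ℝ := fun w =>
    gaussianPDFReal (√u * x) (1 - u).toNNReal w / gaussianPDFReal 0 1 w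
  have hpdf (w : ℝ) : gaussianPDFReal 0 1 w ≠ 0 := (gaussianPDFReal_pos _ _ _ one_ne_zero).ne'
  have hF_sq (w : ℝ) : gaussianPDFReal 0 1 w * F w ^ 2 =
      C * gaussianPDFReal (2 * √u * x / (1 + u)) ((1 - u) / (1 + u)).toNNReal w := by
    rw [← gaussianPDFReal_sq_div_gaussianPDFReal hu0 hu1]
    simp only [F]
    field_simp [hpdf w]
  have hF : MemLp F 2 (gaussianReal 0 1) := by
    refine (memLp_two_iff_integrable_sq (by fun_prop)).2
      ((integrable_gaussianReal_iff one_ne_zero).2 ?_)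
    simp only [hF_sq]
    exact (integrable_gaussianPDFReal _ _).const_mul C
  have hF_norm : ∫ w, F w ^ 2 ∂gaussianReal 0 1 = C := by
    simp only [integral_gaussianReal_eq_integral_smul one_ne_zero, smul_eq_mul, hF_sq,
      integral_const_mul, integral_gaussianPDFReal_eq_one _ hs', mul_one]
  have hF_inner (k : ℕ) :
      ∫ w, F w * aeval w (hermite k) ∂gaussianReal 0 1 = √u ^ k * aeval x (hermite k) := by
    have := integral_hermite_gaussianReal (v := √u) (by rwa [hv]) x k
    rw [hv] at this
    rw [← this, integral_gaussianReal_eq_integral_smul one_ne_zero,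
      integral_gaussianReal_eq_integral_smul hs]
    congr 1 with w
    simp only [F, smul_eq_mul]
    field_simp [hpdf w]
  have hbessel := sum_integral_mul_sq_div_le_integral_sq hF
    (fun k => memLp_two_aeval_gaussianReal (hermite k))
    (fun j k hjk => by simpa [hjk] using integral_hermite_mul_hermite_gaussianReal j k) t
  have hnorm (k : ℕ) : ∫ w, aeval w (hermite k) ^ 2 ∂gaussianReal 0 1 = k.factorial := by
    simpa [sq] using integral_hermite_mul_hermite_gaussianReal k k
  have hvk (k : ℕ) : (√u ^ k) ^ 2 = u ^ k := by rw [← pow_mul, mul_comm, pow_mul, hv]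
  simpa only [hF_inner, hF_norm, hnorm, mul_pow, hvk] using hbessel

theorem sum_prod_of_sum_le_le_inv_pow_mul_prod_sum {ι : Type*} [Fintype ι] [DecidableEq ι]
    {g : ι → ℕ → ℝ} (hg : ∀ i k, 0 ≤ g i k) {u : ℝ} (hu0 : 0 < u) (hu1 : u ≤ 1)
    (s : Finset ℕ) (d : ℕ) :
    ∑ a ∈ (Fintype.piFinset fun _ => s).filter (fun a => ∑ i, a i ≤ d), ∏ i, g i (a i) ≤
      (u ^ d)⁻¹ * ∏ i, ∑ k ∈ s, u ^ k * g i k := by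
  have hprod (a : ι → ℕ) :
      ∏ i, u ^ a i * g i (a i) = u ^ (∑ i, a i) * ∏ i, g i (a i) := by
    rw [prod_mul_distrib, prod_pow_eq_pow_sum]
  calc ∑ a ∈ (Fintype.piFinset fun _ => s).filter (fun a => ∑ i, a i ≤ d), ∏ i, g i (a i)
      ≤ ∑ a ∈ (Fintype.piFinset fun _ => s).filter (fun a => ∑ i, a i ≤ d),
          (u ^ d)⁻¹ * ∏ i, u ^ a i * g i (a i) := by
        refine sum_le_sum fun a ha => ?_
        rw [hprod, ← mul_assoc, ← div_eq_inv_mul]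
        refine le_mul_of_one_le_left (prod_nonneg fun i _ => hg i _) ?_
        rw [one_le_div (by positivity)]
        exact pow_le_pow_of_le_one hu0.le hu1 (mem_filter.1 ha).2
    _ ≤ ∑ a ∈ Fintype.piFinset fun _ => s, (u ^ d)⁻¹ * ∏ i, u ^ a i * g i (a i) :=
        sum_le_sum_of_subset_of_nonneg (filter_subset _ _) fun a _ _ =>
          mul_nonneg (by positivity) (prod_nonneg fun i _ => mul_nonneg (by positivity) (hg i _))
    _ = (u ^ d)⁻¹ * ∏ i, ∑ k ∈ s, u ^ k * g i k := by
        rw [← mul_sum, prod_univ_sum]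

open Classical in
theorem stmt_9_general (n d : ℕ) (y : EuclideanSpace ℝ (Fin n))
    (u : ℝ) (hu0 : 0 < u) (hu1 : u < 1) :
    ∑ a ∈ (Fintype.piFinset fun _ : Fin n => Finset.range (d + 1)).filter
        (fun a => ∑ i, a i ≤ d),
      (∏ i, (Polynomial.aeval (y i) (Polynomial.hermite (a i)) : ℝ)) ^ 2 /
        ∏ i, ((a i).factorial : ℝ)
      ≤ u ^ (-(d : ℝ)) * (1 - u ^ 2) ^ (-(n : ℝ) / 2) * Real.exp (u / (1 + u) * ‖y‖ ^ 2) := by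
  have h1u2 : 0 ≤ 1 - u ^ 2 := by nlinarith
  calc _ = ∑ a ∈ (Fintype.piFinset fun _ : Fin n => range (d + 1)).filter
          (fun a => ∑ i, a i ≤ d),
        ∏ i, aeval (y i) (hermite (a i)) ^ 2 / ((a i).factorial : ℝ) := by
        simp only [prod_div_distrib, prod_pow]
    _ ≤ (u ^ d)⁻¹ * ∏ i, ∑ k ∈ range (d + 1),
          u ^ k * (aeval (y i) (hermite k) ^ 2 / (k.factorial : ℝ)) :=
        sum_prod_of_sum_le_le_inv_pow_mul_prod_sum
          (g := fun i k => aeval (y i) (hermite k) ^ 2 / (k.factorial : ℝ))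
          (fun i k => by positivity) hu0 hu1.le _ d
    _ ≤ (u ^ d)⁻¹ * ∏ i, exp (u / (1 + u) * y i ^ 2) / √(1 - u ^ 2) := by
        gcongr with i
        simpa only [mul_div_assoc] using
          sum_pow_mul_hermite_sq_div_factorial_le hu0.le hu1 (y i) (range (d + 1))
    _ = _ := by
        rw [prod_div_distrib, ← exp_sum, ← mul_sum, ← EuclideanSpace.real_norm_sq_eq,
          prod_const, card_univ, Fintype.card_fin, rpow_neg hu0.le, rpow_natCast, neg_div,
          rpow_neg h1u2, sqrt_eq_rpow, ← rpow_mul_natCast h1u2, one_div_mul_eq_div]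
        ring

open Classical in
/-- Truncated multivariate Hermite sum bound: for `u ∈ (0,1)` and `y ∈ ℝⁿ`,
`∑_{|a| ≤ d} (∏ He_{aᵢ}(yᵢ))² / ∏ aᵢ! ≤ u^{-d} (1-u²)^{-n/2} exp((u/(1+u)) ‖y‖²)`. -/
theorem stmt_9 (n d : ℕ) (hn : 0 < n) (hd : 0 < d) (y : EuclideanSpace ℝ (Fin n))
    (u : ℝ) (hu0 : 0 < u) (hu1 : u < 1) :
    ∑ a ∈ (Fintype.piFinset fun _ : Fin n => Finset.range (d + 1)).filter
        (fun a => ∑ i, a i ≤ d),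
      (∏ i, (Polynomial.aeval (y i) (Polynomial.hermite (a i)) : ℝ)) ^ 2 /
        ∏ i, ((a i).factorial : ℝ)
      ≤ u ^ (-(d : ℝ)) * (1 - u ^ 2) ^ (-(n : ℝ) / 2) * Real.exp (u / (1 + u) * ‖y‖ ^ 2) :=
  stmt_9_general n d y u hu0 hu1
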